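/- Let d ≥ 2 and let D ⊆ ℝ^d consist (with arbitrary multiplicity) of the standard basis vectors e₁,…,e_d. Let x* = (2,1,…,1)/√(d+3). Then (a) the unique nearest neighbor of x* in D under Euclidean distance is e₁, so the set of n nearest neighbors is {e₁,…,e₁} (n copies); and (b) for any n and λ' > 0, the regularized posterior variance after observing n copies of e₁ satisfies σ²_n(x*) ≥ ‖x* − (x*ᵀe₁)e₁‖₂² = (d−1)/(d+3) > 0. -/

import Mathlib

/-!
Conditioning the linear kernel on `n` copies of a vector `e` has a closed form: the regularized
Gram matrix `‖e‖² J + λ I` acts on constant vectors as multiplication by `n ‖e‖² + λ`, so the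
posterior variance is `‖x‖² − n ⟪e, x⟫² / (n ‖e‖² + λ)`. For a unit vector `e` this never drops
below `‖x‖² − ⟪x, e⟫²`, the squared norm of the part of `x` orthogonal to `e`; for the query
`x*` that is `(d − 1)/(d + 3)`.
-/

open Matrix

/-- Regularized posterior (conditional) kernel of the linear kernel
`k(a,b) = ⟪φ a, φ b⟫` after conditioning on the points `xs` with regularization `lam`:
`k_X(a,b) = k(a,b) − k_X(a)ᵀ (K_X + λ I)⁻¹ k_X(b)`.
For `n = 0` this is the prior kernel; the diagonal `postK φ lam xs x x` is `σ²_X(x)`. -/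
noncomputable def postK {α E : Type*} [NormedAddCommGroup E] [InnerProductSpace ℝ E]
    {n : ℕ} (φ : α → E) (lam : ℝ) (xs : Fin n → α) (a b : α) : ℝ :=
  (inner ℝ (φ a) (φ b) : ℝ) -
    (fun i => (inner ℝ (φ (xs i)) (φ a) : ℝ)) ⬝ᵥ
      ((Matrix.of (fun i j => (inner ℝ (φ (xs i)) (φ (xs j)) : ℝ))
          + lam • (1 : Matrix (Fin n) (Fin n) ℝ))⁻¹).mulVec
        (fun i => (inner ℝ (φ (xs i)) (φ b) : ℝ))

section

variable {E : Type*} [NormedAddCommGroup E] [InnerProductSpace ℝ E]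

theorem Matrix.posDef_gram_add_smul_one {ι : Type*} [Fintype ι] [DecidableEq ι] (v : ι → E)
    {lam : ℝ} (hlam : 0 < lam) : (gram ℝ v + lam • (1 : Matrix ι ι ℝ)).PosDef :=
  PosDef.posSemidef_add (posSemidef_gram ℝ v) (PosDef.one.smul hlam)

theorem Matrix.of_const_add_smul_one_mulVec_const {R : Type*} [CommRing R] (n : ℕ) (c lam t : R) :
    (of (fun _ _ => c) + lam • (1 : Matrix (Fin n) (Fin n) R)) *ᵥ (fun _ => t) =
      fun _ => (n * c + lam) * t := by
  ext i
  rw [add_mulVec, smul_mulVec, one_mulVec]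
  simp only [mulVec, dotProduct, of_apply, Finset.sum_const, Finset.card_univ, Fintype.card_fin,
    nsmul_eq_mul, Pi.add_apply, Pi.smul_apply, smul_eq_mul]
  ring

theorem postK_id_const {n : ℕ} (e x y : E) {lam : ℝ} (hlam : 0 < lam) :
    postK id lam (fun _ : Fin n => e) x y =
      inner ℝ x y - n * inner ℝ e x * inner ℝ e y / (n * ‖e‖ ^ 2 + lam) := by
  have hden : 0 < (n : ℝ) * ‖e‖ ^ 2 + lam := by positivity
  have : Invertible (of (fun _ _ : Fin n => inner ℝ e e) + lam • (1 : Matrix (Fin n) (Fin n) ℝ)) :=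
    (posDef_gram_add_smul_one (fun _ : Fin n => e) hlam).isUnit.invertible
  have hsolve : (of (fun _ _ : Fin n => inner ℝ e e) + lam • (1 : Matrix (Fin n) (Fin n) ℝ))⁻¹ *ᵥ
      (fun _ => inner ℝ e y) = fun _ => inner ℝ e y / (n * ‖e‖ ^ 2 + lam) := by
    apply inv_mulVec_eq_vec
    rw [of_const_add_smul_one_mulVec_const, real_inner_self_eq_norm_sq]
    ext; field_simp
  simp only [postK, id, hsolve, dotProduct, Finset.sum_const, Finset.card_univ, Fintype.card_fin,
    nsmul_eq_mul]
  ring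

theorem norm_sub_inner_smul_sq_of_norm_eq_one {e : E} (he : ‖e‖ = 1) (x : E) :
    ‖x - inner ℝ x e • e‖ ^ 2 = ‖x‖ ^ 2 - inner ℝ x e ^ 2 := by
  rw [norm_sub_sq_real, real_inner_smul_right, norm_smul, he, mul_one,
    Real.norm_eq_abs, sq_abs]
  ring

theorem norm_sub_inner_smul_sq_le_postK_id_const {n : ℕ} {e : E} (he : ‖e‖ = 1) (x : E)
    {lam : ℝ} (hlam : 0 < lam) :
    ‖x - inner ℝ x e • e‖ ^ 2 ≤ postK id lam (fun _ : Fin n => e) x x := by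
  rw [postK_id_const e x x hlam, norm_sub_inner_smul_sq_of_norm_eq_one he, he, one_pow, mul_one,
    real_inner_self_eq_norm_sq, real_inner_comm x e]
  have hshrink : n * inner ℝ x e * inner ℝ x e / (n + lam) ≤ inner ℝ x e ^ 2 := by
    rw [div_le_iff₀ (by positivity)]
    nlinarith [mul_nonneg hlam.le (sq_nonneg (inner ℝ x e))]
  linarith

theorem norm_sub_lt_norm_sub_of_inner_lt {x u v : E} (huv : ‖u‖ = ‖v‖)
    (h : inner ℝ x v < inner ℝ x u) : ‖x - u‖ < ‖x - v‖ := by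
  rw [← sq_lt_sq₀ (norm_nonneg _) (norm_nonneg _), norm_sub_sq_real, norm_sub_sq_real, huv]
  linarith

end

theorem EuclideanSpace.norm_sq_eq_one_of_apply_eq {d : ℕ} {z0 : Fin d}
    {x : EuclideanSpace ℝ (Fin d)} (hx : ∀ i, x i = (if i = z0 then 2 else 1) / √(d + 3)) :
    ‖x‖ ^ 2 = 1 := by
  have hcoord : ∀ i, x i ^ 2 = (1 + if i = z0 then 3 else 0) / (d + 3) := by
    intro i
    rw [hx, div_pow, Real.sq_sqrt (by positivity)]
    split_ifs <;> norm_num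
  have hsum : ∑ i : Fin d, (1 + if i = z0 then (3 : ℝ) else 0) = d + 3 := by
    simp [Finset.sum_add_distrib]
  rw [EuclideanSpace.real_norm_sq_eq, Finset.sum_congr rfl fun i _ => hcoord i, ← Finset.sum_div,
    hsum, div_self (by positivity)]

/-- Insufficiency of Nearest Neighbor retrieval: with data space consisting of the
standard basis vectors (with multiplicity) and query `x* = (2,1,…,1)/√(d+3)`:
(a) the unique nearest neighbor of `x*` is `e₁`, so Nearest Neighbor retrieval selects
`n` copies of `e₁`; (b) the regularized posterior variance after observing `n` copies of
`e₁` is at least the irreducible amount `‖x* − (x*ᵀe₁)e₁‖² = (d−1)/(d+3) > 0`. -/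
theorem nearest_neighbor_insufficiency {d : ℕ} (hd : 2 ≤ d) (n : ℕ) (lam : ℝ) (hlam : 0 < lam)
    (z0 : Fin d)
    (xstar : EuclideanSpace ℝ (Fin d))
    (hxstar : ∀ i, xstar i = (if i = z0 then 2 else 1) / Real.sqrt (d + 3)) :
    (∀ i : Fin d, i ≠ z0 →
        ‖xstar - EuclideanSpace.single z0 (1 : ℝ)‖ < ‖xstar - EuclideanSpace.single i (1 : ℝ)‖)
    ∧ ((d : ℝ) - 1) / ((d : ℝ) + 3)
        ≤ postK (id : EuclideanSpace ℝ (Fin d) → EuclideanSpace ℝ (Fin d)) lam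
            (fun _ : Fin n => EuclideanSpace.single z0 (1 : ℝ)) xstar xstar
    ∧ ‖xstar - (inner ℝ xstar (EuclideanSpace.single z0 (1 : ℝ)) : ℝ)
          • EuclideanSpace.single z0 (1 : ℝ)‖ ^ 2 = ((d : ℝ) - 1) / ((d : ℝ) + 3)
    ∧ 0 < ((d : ℝ) - 1) / ((d : ℝ) + 3) := by
  have hinner : ∀ i, inner ℝ xstar (EuclideanSpace.single i (1 : ℝ)) = xstar i := by
    simp [EuclideanSpace.inner_single_right]
  have hproj : ‖xstar - inner ℝ xstar (EuclideanSpace.single z0 (1 : ℝ)) •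
      EuclideanSpace.single z0 (1 : ℝ)‖ ^ 2 = ((d : ℝ) - 1) / ((d : ℝ) + 3) := by
    rw [norm_sub_inner_smul_sq_of_norm_eq_one (by simp),
      EuclideanSpace.norm_sq_eq_one_of_apply_eq hxstar, hinner, hxstar, if_pos rfl, div_pow,
      Real.sq_sqrt (by positivity)]
    field_simp
    ring
  refine ⟨fun i hi => norm_sub_lt_norm_sub_of_inner_lt (by simp) ?_,
    hproj ▸ norm_sub_inner_smul_sq_le_postK_id_const (by simp) xstar hlam, hproj, ?_⟩
  · rw [hinner, hinner, hxstar, hxstar, if_neg hi, if_pos rfl]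
    exact div_lt_div_of_pos_right one_lt_two (by positivity)
  · have : (2 : ℝ) ≤ d := by exact_mod_cast hd
    apply div_pos <;> linarith
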